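/- Let d ∈ ℕ and let (A, α) and (B, β) be interpretations, i.e., finite linear orders A_M, A_N with assignments of the variables x, y, z (extended by min and max). If the d-type of (A, α) equals the d-type of (B, β) — meaning the orderings of the five values α(min), α(x), α(y), α(z), α(max) and β(min), β(x), β(y), β(z), β(max) agree, and each consecutive gap is either equal in both interpretations or exceeds 2^{d+1} in both — then (A, α) and (B, β) satisfy the same first-order {<}-formulas of quantifier depth at most d. -/

import Mathlib

open FirstOrder

/-- Quantifier depth of a bounded formula. -/
def qdepth {L : Language} {α : Type} : ∀ {n : ℕ}, L.BoundedFormula α n → ℕ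
  | _, .falsum => 0
  | _, .equal _ _ => 0
  | _, .rel _ _ => 0
  | _, .imp f g => max (qdepth f) (qdepth g)
  | _, .all f => qdepth f + 1

/-!
An Ehrenfeucht–Fraïssé argument on distances. Call two tuples of points `P`-equivalent if every
pairwise distance agrees in both or is at least `P` in both. If the tuples, each containing the
minimum and the maximum, are `2^(k+1)`-equivalent, then any new point on one side has a partner
on the other side keeping the extended tuples `2^k`-equivalent: copy its distance to the nearer
neighbour when that distance is below `2^k`, and otherwise put it `2^k` above its left neighbour,
which fits because the surrounding gap is then at least `2^(k+1)` on both sides. Atomic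
`{≤, =}`-formulas only see the order of the points, which `1`-equivalence preserves, so induction on
the quantifier depth shows that `2^k`-equivalent tuples satisfy the same formulas of depth `≤ k`.
Equal `d`-types give `2^(d+1)`-equivalence of consecutive points in sorted order, hence, summing
gaps, of all pairs.
-/

/-- The subtraction is truncated, so for `0 < P` this also gives `y ≤ x ↔ y' ≤ x'`: a `GapEquiv`
records the order type of the two tuples together with their distances capped at `P`. -/
def GapAgree (P x y x' y' : ℕ) : Prop :=
  y - x = y' - x' ∨ (P ≤ y - x ∧ P ≤ y' - x')

def GapEquiv {γ : Type*} (P : ℕ) (a b : γ → ℕ) : Prop :=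
  ∀ i j, GapAgree P (a i) (a j) (b i) (b j)

namespace GapAgree

variable {P Q x y w x' y' w' : ℕ}

theorem self (P x x' : ℕ) : GapAgree P x x x' x' := Or.inl (by simp)

theorem symm (h : GapAgree P x y x' y') : GapAgree P x' y' x y :=
  h.imp Eq.symm And.symm

theorem mono (hPQ : P ≤ Q) (h : GapAgree Q x y x' y') : GapAgree P x y x' y' :=
  h.imp_right fun ⟨h₁, h₂⟩ => ⟨hPQ.trans h₁, hPQ.trans h₂⟩

theorem le_iff (hP : 0 < P) (h : GapAgree P x y x' y') : y ≤ x ↔ y' ≤ x' := by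
  unfold GapAgree at h; omega

theorem trans (hxy : x ≤ y) (hyw : y ≤ w) (hxy' : x' ≤ y') (hyw' : y' ≤ w')
    (h₁ : GapAgree P x y x' y') (h₂ : GapAgree P y w y' w') : GapAgree P x w x' w' := by
  unfold GapAgree at *; omega

end GapAgree

namespace GapEquiv

variable {γ δ : Type*} {P Q : ℕ} {a b : γ → ℕ}

theorem symm (h : GapEquiv P a b) : GapEquiv P b a := fun i j => (h i j).symm

theorem mono (hPQ : P ≤ Q) (h : GapEquiv Q a b) : GapEquiv P a b :=
  fun i j => (h i j).mono hPQ

theorem of_comp {f : δ → γ} (hf : f.Surjective) (h : GapEquiv P (a ∘ f) (b ∘ f)) :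
    GapEquiv P a b := by
  intro i j
  obtain ⟨i, rfl⟩ := hf i
  obtain ⟨j, rfl⟩ := hf j
  exact h i j

theorem le_iff (hP : 0 < P) (h : GapEquiv P a b) (i j : γ) : a i ≤ a j ↔ b i ≤ b j :=
  (h j i).le_iff hP

theorem eq_iff (hP : 0 < P) (h : GapEquiv P a b) (i j : γ) : a i = a j ↔ b i = b j := by
  simp only [le_antisymm_iff, h.le_iff hP]

end GapEquiv

theorem GapEquiv.of_monotone {m P : ℕ} {s t : Fin (m + 1) → ℕ} (hs : Monotone s)
    (ht : Monotone t)
    (hgap : ∀ i : Fin m, GapAgree P (s i.castSucc) (s i.succ) (t i.castSucc) (t i.succ)) :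
    GapEquiv P s t := by
  intro i j
  rcases le_or_gt i j with hij | hji
  · induction j using Fin.induction with
    | zero => rw [Fin.le_zero_iff.mp hij]; exact .self P _ _
    | succ j ih =>
      rcases eq_or_ne i j.succ with rfl | hne
      · exact .self P _ _
      · have hij' : i ≤ j.castSucc := Fin.le_castSucc_iff.mpr (lt_of_le_of_ne hij hne)
        exact (ih hij').trans (hs hij') (hs (Fin.castSucc_le_succ j)) (ht hij')
          (ht (Fin.castSucc_le_succ j)) (hgap j)
  · exact Or.inl (by rw [Nat.sub_eq_zero_of_le (hs hji.le), Nat.sub_eq_zero_of_le (ht hji.le)])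

theorem GapEquiv.exists_extend {γ : Type*} [Finite γ] {P : ℕ} (hP : 0 < P) {a b : γ → ℕ}
    (h : GapEquiv (2 * P) a b) {u : ℕ} {lo hi : γ} (hlo : a lo ≤ u) (hhi : u ≤ a hi) :
    ∃ z ≤ b hi, ∀ i, GapAgree P (a i) u (b i) z ∧ GapAgree P u (a i) z (b i) := by
  obtain ⟨i₀, hi₀u, hi₀⟩ := Set.exists_max_image {i | a i ≤ u} a (Set.toFinite _) ⟨lo, hlo⟩
  obtain ⟨j₀, hj₀u, hj₀⟩ := Set.exists_min_image {i | u ≤ a i} a (Set.toFinite _) ⟨hi, hhi⟩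
  simp only [Set.mem_ofPred_eq] at hi₀u hj₀u hi₀ hj₀
  -- Copy the distance to the nearer of the two neighbours of `u` if it is below `P`;
  -- otherwise both are `≥ P` away, the gap `b j₀ - b i₀` is `≥ 2P`, and `b i₀ + P` fits.
  let z := if u - a i₀ < P then b i₀ + (u - a i₀)
    else if a j₀ - u < P then b j₀ - (a j₀ - u) else b i₀ + P
  have h₀ := h i₀ j₀
  have h₀' := h j₀ i₀
  unfold GapAgree at h₀ h₀'
  refine ⟨z, ?_, fun i => ?_⟩
  · have hbj₀ : b j₀ ≤ b hi := (h.le_iff (by omega) j₀ hi).mp (hj₀ hi hhi)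
    dsimp only [z]
    split_ifs <;> omega
  · rcases le_or_gt (a i) u with hiu | hui
    · have hii₀ := hi₀ i hiu
      have h₁ := h i i₀
      have h₁' := h i₀ i
      unfold GapAgree at h₁ h₁' ⊢
      constructor <;> dsimp only [z] <;> split_ifs <;> omega
    · have hj₀i := hj₀ i hui.le
      have h₁ := h i j₀
      have h₁' := h j₀ i
      unfold GapAgree at h₁ h₁' ⊢
      constructor <;> dsimp only [z] <;> split_ifs <;> omega

theorem Sum.exists_eq_map_castSucc_or_eq_inr_last {ι : Type*} {n : ℕ} (p : ι ⊕ Fin (n + 1)) :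
    (∃ i, p = Sum.map id Fin.castSucc i) ∨ p = Sum.inr (Fin.last n) := by
  rcases p with i | t
  · exact Or.inl ⟨Sum.inl i, rfl⟩
  · rcases Fin.eq_castSucc_or_eq_last t with ⟨t, rfl⟩ | rfl
    · exact Or.inl ⟨Sum.inr t, rfl⟩
    · exact Or.inr rfl

theorem GapEquiv.sumElim_snoc {ι : Type*} {n P Q : ℕ} (hPQ : P ≤ Q) {a b : ι → ℕ}
    {xs ys : Fin n → ℕ} {u z : ℕ} (h : GapEquiv Q (Sum.elim a xs) (Sum.elim b ys))
    (hu : ∀ i, GapAgree P (Sum.elim a xs i) u (Sum.elim b ys i) z ∧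
      GapAgree P u (Sum.elim a xs i) z (Sum.elim b ys i)) :
    GapEquiv P (Sum.elim a (Fin.snoc xs u)) (Sum.elim b (Fin.snoc ys z)) := by
  have old : ∀ (c : ι → ℕ) (cs : Fin n → ℕ) (w : ℕ) (i : ι ⊕ Fin n),
      Sum.elim c (Fin.snoc cs w) (Sum.map id Fin.castSucc i) = Sum.elim c cs i := by
    rintro c cs w (i | i) <;> simp
  have new : ∀ (c : ι → ℕ) (cs : Fin n → ℕ) (w : ℕ),
      Sum.elim c (Fin.snoc cs w) (Sum.inr (Fin.last n)) = w := by
    simp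
  intro p q
  rcases Sum.exists_eq_map_castSucc_or_eq_inr_last p with ⟨i, rfl⟩ | rfl <;>
    rcases Sum.exists_eq_map_castSucc_or_eq_inr_last q with ⟨j, rfl⟩ | rfl <;>
    simp only [old, new]
  · exact (h i j).mono hPQ
  · exact (hu i).1
  · exact (hu j).2
  · exact .self P u z

theorem exists_gapEquiv_snoc {ι : Type*} [Finite ι] {n M N k : ℕ} {v : ι → Fin (M + 1)}
    {w : ι → Fin (N + 1)} {lo hi : ι} (hv0 : v lo = 0) (hvM : v hi = Fin.last M)
    {xs : Fin n → Fin (M + 1)} {ys : Fin n → Fin (N + 1)}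
    (h : GapEquiv (2 ^ (k + 1)) (Fin.val ∘ Sum.elim v xs) (Fin.val ∘ Sum.elim w ys))
    (u : Fin (M + 1)) :
    ∃ u' : Fin (N + 1),
      GapEquiv (2 ^ k) (Fin.val ∘ Sum.elim v (Fin.snoc xs u))
        (Fin.val ∘ Sum.elim w (Fin.snoc ys u')) := by
  rw [pow_succ', Sum.comp_elim, Sum.comp_elim] at h
  obtain ⟨z, hzN, hz⟩ := h.exists_extend (pow_pos two_pos k) (lo := .inl lo) (hi := .inl hi)
    (u := u) (by simp [hv0]) (by simpa [hvM] using u.is_le)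
  refine ⟨⟨z, by simp only [Sum.elim_inl, Function.comp_apply] at hzN; omega⟩, ?_⟩
  rw [Sum.comp_elim, Sum.comp_elim, Fin.comp_snoc, Fin.comp_snoc]
  exact h.sumElim_snoc (Nat.le_mul_of_pos_left _ two_pos) hz

namespace FirstOrder.Language

theorem Term.exists_eq_var {L : Language} [L.IsRelational] {α : Type*}
    (t : L.Term α) : ∃ i, t = var i := by
  cases t with
  | var i => exact ⟨i, rfl⟩
  | func f _ => exact isEmptyElim f

section Realize

attribute [local instance] orderStructure

variable {ι : Type} [Finite ι] {M N : ℕ} {v : ι → Fin (M + 1)} {w : ι → Fin (N + 1)}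
  {lo hi : ι}

theorem BoundedFormula.realize_iff_of_gapEquiv (hv0 : v lo = 0) (hvM : v hi = Fin.last M)
    (hw0 : w lo = 0) (hwN : w hi = Fin.last N) {n : ℕ} (φ : Language.order.BoundedFormula ι n)
    {k : ℕ} (hφ : qdepth φ ≤ k) {xs : Fin n → Fin (M + 1)} {ys : Fin n → Fin (N + 1)}
    (h : GapEquiv (2 ^ k) (Fin.val ∘ Sum.elim v xs) (Fin.val ∘ Sum.elim w ys)) :
    φ.Realize v xs ↔ φ.Realize w ys := by
  induction φ generalizing k with
  | falsum => rfl
  | equal t₁ t₂ =>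
    obtain ⟨i, rfl⟩ := t₁.exists_eq_var
    obtain ⟨j, rfl⟩ := t₂.exists_eq_var
    simpa only [BoundedFormula.Realize, Term.realize_var, Function.comp_apply, Fin.val_inj]
      using h.eq_iff (pow_pos two_pos k) i j
  | rel R ts =>
    cases R
    obtain ⟨i, hi⟩ := (ts 0).exists_eq_var
    obtain ⟨j, hj⟩ := (ts 1).exists_eq_var
    change (ts 0).realize _ ≤ (ts 1).realize _ ↔ (ts 0).realize _ ≤ (ts 1).realize _
    simpa only [hi, hj, Term.realize_var, Function.comp_apply, Fin.le_def]
      using h.le_iff (pow_pos two_pos k) i j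
  | imp f g ihf ihg =>
    obtain ⟨hf, hg⟩ := max_le_iff.mp hφ
    exact imp_congr (ihf hf h) (ihg hg h)
  | all f ih =>
    obtain ⟨k, rfl⟩ := Nat.exists_eq_add_of_lt hφ
    refine ⟨fun H x => ?_, fun H x => ?_⟩
    · obtain ⟨x', h'⟩ := exists_gapEquiv_snoc hw0 hwN h.symm x
      exact (ih (by omega) h'.symm).mp (H x')
    · obtain ⟨x', h'⟩ := exists_gapEquiv_snoc hv0 hvM h x
      exact (ih (by omega) h').mpr (H x')

theorem Formula.realize_iff_of_gapEquiv (hv0 : v lo = 0) (hvM : v hi = Fin.last M)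
    (hw0 : w lo = 0) (hwN : w hi = Fin.last N) (φ : Language.order.Formula ι) {k : ℕ}
    (hφ : qdepth φ ≤ k) (h : GapEquiv (2 ^ k) (Fin.val ∘ v) (Fin.val ∘ w)) :
    φ.Realize v ↔ φ.Realize w := by
  refine BoundedFormula.realize_iff_of_gapEquiv hv0 hvM hw0 hwN φ hφ ?_
  rintro (i | i) (j | j)
  exacts [h i j, j.elim0, i.elim0, i.elim0]

end Realize

end FirstOrder.Language

/-- Interpretations are finite linear orders `{0,…,M}` together with an
assignment of the five values min, x, y, z, max (modelled as `Fin 5 → Fin (M+1)`,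
with component 0 = min = 0 and component 4 = max = M).  If the d-types agree —
the sorted arrangements (given by a common permutation σ) coincide and each
consecutive gap is either equal in both interpretations or at least `2^(d+1)`
in both — then the interpretations satisfy the same first-order {<}-formulas of
quantifier depth at most d. -/
theorem stmt_15 (d M N : ℕ)
    (α : Fin 5 → Fin (M + 1)) (β : Fin 5 → Fin (N + 1))
    (hα0 : α 0 = 0) (hα4 : α 4 = Fin.last M)
    (hβ0 : β 0 = 0) (hβ4 : β 4 = Fin.last N)
    (σ : Equiv.Perm (Fin 5))
    (hmonoα : ∀ i j : Fin 5, i ≤ j → α (σ i) ≤ α (σ j))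
    (hmonoβ : ∀ i j : Fin 5, i ≤ j → β (σ i) ≤ β (σ j))
    (hgap : ∀ i : Fin 4,
      ((α (σ i.succ) : ℕ) - (α (σ i.castSucc) : ℕ) =
        (β (σ i.succ) : ℕ) - (β (σ i.castSucc) : ℕ)) ∨
      (2 ^ (d + 1) ≤ (α (σ i.succ) : ℕ) - (α (σ i.castSucc) : ℕ) ∧
        2 ^ (d + 1) ≤ (β (σ i.succ) : ℕ) - (β (σ i.castSucc) : ℕ)))
    (φ : Language.order.Formula (Fin 5)) (hφ : qdepth φ ≤ d) :
    (letI := Language.orderStructure (Fin (M + 1)); φ.Realize α) ↔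
      (letI := Language.orderStructure (Fin (N + 1)); φ.Realize β) := by
  have hsorted : GapEquiv (2 ^ (d + 1)) (Fin.val ∘ α ∘ σ) (Fin.val ∘ β ∘ σ) :=
    GapEquiv.of_monotone (fun i j hij => hmonoα i j hij) (fun i j hij => hmonoβ i j hij) hgap
  have h : GapEquiv (2 ^ d) (Fin.val ∘ α) (Fin.val ∘ β) :=
    (hsorted.of_comp σ.surjective).mono (Nat.pow_le_pow_right two_pos d.le_succ)
  exact Language.Formula.realize_iff_of_gapEquiv hα0 hα4 hβ0 hβ4 φ hφ h
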